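/- Fix a parameter p with 1/2 < p < 1, an integer k₀ ≥ 0 and ε ∈ (0,1). Set θ̃ = Φ^{k₀}(1-p) and assume θ̃ < 1/2. Write Θ_k = max(Φ^k(1-p), 1-Φ^k(1-p)), Q = ∏_{k=0}^{k₀-1} Θ_k, θ̃_ε = (p(1-ε)θ̃ + (1-p)(1-(2-ε)θ̃))/(1-θ̃), p_ε = p(1-ε) + (1-p)ε, and Π₀ = [ Σ_{n=0}^{k₀} ∏_{k=0}^{n-1} Θ_k + Q·((1-θ̃)·w(θ̃_ε) + θ̃·w(1-p_ε)) ]⁻¹. Then Π₀·(1 + (1-ε)·θ̃·Q) > 1/w(1-p) if and only if (1-θ̃)·(w(Φ(θ̃)) - w(θ̃_ε)) > θ̃·(w(1-p_ε) - (1-ε)·w(1-p)). (The left-hand quantity is the value of the perturbed strategy σ_{k₀,ε} and 1/w(1-p) is the value of σ*.) -/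

import Mathlib

noncomputable section

/-- The map `f_B`: `f_B(θ) = (3p-1) - γ/θ` for `θ ≥ 1/2`, and `1-p` for `θ ≤ 1/2`,
where `γ = 2p - 1`. -/
def fB (p θ : ℝ) : ℝ := if 1/2 ≤ θ then (3*p - 1) - (2*p - 1)/θ else 1 - p

/-- The map `f_T`: `f_T(θ) = p` for `θ ≥ 1/2`, and `(2-3p) + γ/(1-θ)` for `θ ≤ 1/2`. -/
def fT (p θ : ℝ) : ℝ := if 1/2 ≤ θ then p else (2 - 3*p) + (2*p - 1)/(1 - θ)

/-- The belief dynamics `Φ`: `Φ(x) = f_B(x)` if `x ≥ 1/2`, `f_T(x)` otherwise. -/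
def Phi (p x : ℝ) : ℝ := if 1/2 ≤ x then fB p x else fT p x

/-- `Θ_k(θ) = max(Φ^k(θ), 1 - Φ^k(θ))`. -/
def Theta (p : ℝ) (k : ℕ) (θ : ℝ) : ℝ := max ((Phi p)^[k] θ) (1 - (Phi p)^[k] θ)

/-- `w(θ) = Σ_{n=0}^∞ ∏_{k=0}^{n-1} Θ_k(θ)` (empty product = 1). -/
def w (p θ : ℝ) : ℝ := ∑' n : ℕ, ∏ k ∈ Finset.range n, Theta p k θ


/-! After `k₀ + 1` steps the series for `w(1-p)` splits as `S + Q·Θ_{k₀}·w(Φ(θ̃))`, where `S` is the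
finite sum in `Π₀` and `Θ_{k₀} = 1 - θ̃` because `θ̃ < 1/2`. Cross-multiplying the two positive
values, the difference of the two sides of the comparison is exactly `Q` times the difference of the
two sides of the criterion, and `Q > 0`. -/

lemma Phi_mem_Icc {p x : ℝ} (hp : 1/2 ≤ p) (hx : x ∈ Set.Icc (0:ℝ) 1) :
    Phi p x ∈ Set.Icc (1 - p) p := by
  obtain ⟨hx0, hx1⟩ := hx
  unfold Phi fB fT
  split_ifs with h
  · have hx0' : 0 < x := by linarith
    have hupper : (2*p - 1)/x ≤ 2*(2*p - 1) := by rw [div_le_iff₀ hx0']; nlinarith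
    have hlower : 2*p - 1 ≤ (2*p - 1)/x := by rw [le_div_iff₀ hx0']; nlinarith
    constructor <;> linarith
  · have hx0' : 0 < 1 - x := by linarith
    have hupper : (2*p - 1)/(1 - x) ≤ 2*(2*p - 1) := by rw [div_le_iff₀ hx0']; nlinarith
    have hlower : 2*p - 1 ≤ (2*p - 1)/(1 - x) := by rw [le_div_iff₀ hx0']; nlinarith
    constructor <;> linarith

lemma mapsTo_Phi_Icc {p : ℝ} (hp : 1/2 ≤ p) (hp1 : p ≤ 1) :
    Set.MapsTo (Phi p) (Set.Icc (1 - p) p) (Set.Icc (1 - p) p) :=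
  fun _ hx => Phi_mem_Icc hp ⟨by linarith [hx.1], by linarith [hx.2]⟩

lemma half_le_Theta (p : ℝ) (k : ℕ) (θ : ℝ) : 1/2 ≤ Theta p k θ := by
  unfold Theta
  rcases le_total ((Phi p)^[k] θ) (1/2) with h | h
  · exact le_max_of_le_right (by linarith)
  · exact le_max_of_le_left h

lemma Theta_nonneg (p : ℝ) (k : ℕ) (θ : ℝ) : 0 ≤ Theta p k θ :=
  le_trans (by norm_num) (half_le_Theta p k θ)

lemma Theta_le {p θ : ℝ} (hp : 1/2 ≤ p) (hp1 : p ≤ 1) (hθ : θ ∈ Set.Icc (1 - p) p) (k : ℕ) :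
    Theta p k θ ≤ p := by
  obtain ⟨h1, h2⟩ := (mapsTo_Phi_Icc hp hp1).iterate k hθ
  exact max_le h2 (by linarith)

lemma Theta_add (p : ℝ) (j m : ℕ) (θ : ℝ) :
    Theta p (j + m) θ = Theta p j ((Phi p)^[m] θ) := by
  simp only [Theta, Function.iterate_add_apply]

lemma summable_prod_Theta {p θ : ℝ} (hp : 1/2 ≤ p) (hp1 : p < 1) (hθ : θ ∈ Set.Icc (1 - p) p) :
    Summable fun n => ∏ k ∈ Finset.range n, Theta p k θ := by
  refine Summable.of_nonneg_of_le (fun n => Finset.prod_nonneg fun k _ => Theta_nonneg p k θ)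
    (fun n => ?_) (summable_geometric_of_lt_one (by linarith) hp1)
  calc ∏ k ∈ Finset.range n, Theta p k θ
      ≤ ∏ _k ∈ Finset.range n, p :=
        Finset.prod_le_prod (fun k _ => Theta_nonneg p k θ) (fun k _ => Theta_le hp hp1.le hθ k)
    _ = p ^ n := by simp

lemma w_nonneg (p θ : ℝ) : 0 ≤ w p θ :=
  tsum_nonneg fun _ => Finset.prod_nonneg fun k _ => Theta_nonneg p k θ

lemma w_eq_sum_add_prod_mul_w {p θ : ℝ}
    (hs : Summable fun n => ∏ k ∈ Finset.range n, Theta p k θ) (m : ℕ) :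
    w p θ = ∑ n ∈ Finset.range m, ∏ k ∈ Finset.range n, Theta p k θ
      + (∏ k ∈ Finset.range m, Theta p k θ) * w p ((Phi p)^[m] θ) := by
  have htail (i : ℕ) : ∏ k ∈ Finset.range (i + m), Theta p k θ
      = (∏ k ∈ Finset.range m, Theta p k θ) * ∏ j ∈ Finset.range i, Theta p j ((Phi p)^[m] θ) := by
    rw [add_comm i m, Finset.prod_range_add]
    simp only [add_comm m, Theta_add]
  rw [w, ← hs.sum_add_tsum_nat_add m, w, ← tsum_mul_left]
  exact congrArg _ (tsum_congr htail)

lemma one_le_sum_range_succ_prod {f : ℕ → ℝ} (hf : ∀ k, 0 ≤ f k) (m : ℕ) :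
    1 ≤ ∑ n ∈ Finset.range (m + 1), ∏ k ∈ Finset.range n, f k := by
  rw [Finset.sum_range_succ', Finset.prod_range_zero]
  exact le_add_of_nonneg_left (Finset.sum_nonneg fun n _ => Finset.prod_nonneg fun k _ => hf k)

theorem perturbed_strategy_comparison_general (p : ℝ) (hp : 1/2 < p) (hp1 : p < 1)
    (k0 : ℕ) (ε : ℝ)
    (θt : ℝ) (hθt : θt = (Phi p)^[k0] (1 - p)) (hlt : θt < 1/2) :
    let Θ : ℕ → ℝ := fun k => Theta p k (1 - p)
    let Q : ℝ := ∏ k ∈ Finset.range k0, Θ k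
    let θε : ℝ := (p*(1-ε)*θt + (1-p)*(1-(2-ε)*θt))/(1-θt)
    let pε : ℝ := p*(1-ε) + (1-p)*ε
    let Pi0 : ℝ := ((∑ n ∈ Finset.range (k0+1), ∏ k ∈ Finset.range n, Θ k)
        + Q*((1-θt)*w p θε + θt*w p (1-pε)))⁻¹
    (Pi0*(1 + (1-ε)*θt*Q) > 1/(w p (1-p)) ↔
      (1-θt)*(w p (Phi p θt) - w p θε) > θt*(w p (1-pε) - (1-ε)*w p (1-p))) := by
  intro Θ Q θε pε Pi0
  have hstart : 1 - p ∈ Set.Icc (1 - p) p := ⟨le_rfl, by linarith⟩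
  have hθt_pos : 0 < θt := by
    linarith [hθt ▸ ((mapsTo_Phi_Icc hp.le hp1.le).iterate k0 hstart).1]
  have hQ : 0 < Q := Finset.prod_pos fun k _ => by linarith [half_le_Theta p k (1 - p)]
  set S := ∑ n ∈ Finset.range (k0+1), ∏ k ∈ Finset.range n, Θ k
  have hS : 1 ≤ S := one_le_sum_range_succ_prod (fun k => Theta_nonneg p k (1 - p)) k0
  have hΘk0 : Θ k0 = 1 - θt := by simp only [Θ, Theta, ← hθt]; exact max_eq_right (by linarith)
  have hW : w p (1 - p) = S + Q * ((1 - θt) * w p (Phi p θt)) := by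
    rw [w_eq_sum_add_prod_mul_w (summable_prod_Theta hp.le hp1 hstart) (k0 + 1),
      Finset.prod_range_succ, Function.iterate_succ_apply', ← hθt]
    simp only [S, Q, ← hΘk0]; ring
  have hW_pos : 0 < w p (1 - p) := by
    have := mul_nonneg hQ.le (mul_nonneg (by linarith : 0 ≤ 1 - θt) (w_nonneg p (Phi p θt)))
    linarith
  have hD_pos : 0 < S + Q * ((1 - θt) * w p θε + θt * w p (1 - pε)) := by
    have := mul_nonneg hQ.le (add_nonneg (mul_nonneg (by linarith : 0 ≤ 1 - θt) (w_nonneg p θε))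
      (mul_nonneg hθt_pos.le (w_nonneg p (1 - pε))))
    linarith
  have hcross : (1 + (1-ε)*θt*Q) * w p (1 - p) - (S + Q * ((1 - θt) * w p θε + θt * w p (1 - pε)))
      = Q * ((1-θt)*(w p (Phi p θt) - w p θε) - θt*(w p (1-pε) - (1-ε)*w p (1-p))) := by
    rw [hW]; ring
  rw [gt_iff_lt, inv_mul_eq_div, div_lt_div_iff₀ hW_pos hD_pos, one_mul, ← sub_pos, hcross,
    mul_pos_iff_of_pos_left hQ, sub_pos]

/-- The value of the perturbed strategy `σ_{k₀,ε}` exceeds `1/w(1-p)` (the value of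
`σ*`) if and only if `(1-θ̃)(w(Φ(θ̃)) - w(θ̃_ε)) > θ̃(w(1-p_ε) - (1-ε)w(1-p))`. -/
theorem perturbed_strategy_comparison (p : ℝ) (hp : 1/2 < p) (hp1 : p < 1)
    (k0 : ℕ) (ε : ℝ) (hε : ε ∈ Set.Ioo (0:ℝ) 1)
    (θt : ℝ) (hθt : θt = (Phi p)^[k0] (1 - p)) (hlt : θt < 1/2) :
    let Θ : ℕ → ℝ := fun k => Theta p k (1 - p)
    let Q : ℝ := ∏ k ∈ Finset.range k0, Θ k
    let θε : ℝ := (p*(1-ε)*θt + (1-p)*(1-(2-ε)*θt))/(1-θt)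
    let pε : ℝ := p*(1-ε) + (1-p)*ε
    let Pi0 : ℝ := ((∑ n ∈ Finset.range (k0+1), ∏ k ∈ Finset.range n, Θ k)
        + Q*((1-θt)*w p θε + θt*w p (1-pε)))⁻¹
    (Pi0*(1 + (1-ε)*θt*Q) > 1/(w p (1-p)) ↔
      (1-θt)*(w p (Phi p θt) - w p θε) > θt*(w p (1-pε) - (1-ε)*w p (1-p))) :=
  perturbed_strategy_comparison_general p hp hp1 k0 ε θt hθt hlt
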